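/- Let μ be a measure, 1 ≤ p, and θ > 3 real, and let u ∈ L^θ(μ) ∩ L^{3θ}(μ). For any λ₁, λ₂ > 1 with 1/λ₁ + 1/λ₂ = 1 and θ ≤ 4λ₁ ≤ 3θ and θ ≤ (θ−2)λ₂ ≤ 3θ, one has ‖u‖_{L^{4λ₁}}² · ‖u‖_{L^{(θ−2)λ₂}}^{(θ−2)/2} ≤ ‖u‖_{L^θ}^{θ/2 − 1/2} · ‖u‖_{L^{3θ}}^{3/2}. -/

import Mathlib

/-!
Since `1/r = t/p + (1-t)/q`, Hölder's inequality for `|u| = |u|^t · |u|^(1-t)` with exponents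
`p/t` and `q/(1-t)` gives `‖u‖_r ≤ ‖u‖_p^t ‖u‖_q^(1-t)`. Multiplying these bounds for
`r = 4λ₁` and `r = (θ-2)λ₂`, the exponents of `‖u‖_θ` add up to `θ/2 - 1/2` precisely because
`1/λ₁ + 1/λ₂ = 1`, and then those of `‖u‖_{3θ}` add up to `2 + (θ-2)/2 - (θ/2 - 1/2) = 3/2`.
-/

open MeasureTheory Set
open scoped ENNReal

theorem exists_mem_Icc_one_div_eq {p q r : ℝ} (hp : 0 < p) (hpr : p ≤ r) (hrq : r ≤ q) :
    ∃ t ∈ Icc (0 : ℝ) 1, 1 / r = t / p + (1 - t) / q := by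
  have hmem : 1 / r ∈ segment ℝ (1 / q) (1 / p) := by
    rw [segment_eq_Icc (one_div_le_one_div_of_le hp (hpr.trans hrq))]
    exact ⟨one_div_le_one_div_of_le (hp.trans_le hpr) hrq, one_div_le_one_div_of_le hp hpr⟩
  obtain ⟨a, t, ha, ht, hat, h⟩ := hmem
  refine ⟨t, ⟨ht, by linarith⟩, ?_⟩
  rw [← h, ← eq_sub_of_add_eq hat]
  simp only [smul_eq_mul]
  ring

theorem ENNReal.rpow_mul_rpow_le_of_le_rpow_mul_rpow {x y a b : ℝ≥0∞} {s t u v : ℝ}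
    (hs : s ∈ Icc (0 : ℝ) 1) (ht : t ∈ Icc (0 : ℝ) 1) (hu : 0 ≤ u) (hv : 0 ≤ v)
    (hx : x ≤ a ^ s * b ^ (1 - s)) (hy : y ≤ a ^ t * b ^ (1 - t)) :
    x ^ u * y ^ v ≤ a ^ (s * u + t * v) * b ^ ((1 - s) * u + (1 - t) * v) := by
  obtain ⟨hs₀, hs₁⟩ := hs
  obtain ⟨ht₀, ht₁⟩ := ht
  calc x ^ u * y ^ v ≤ (a ^ s * b ^ (1 - s)) ^ u * (a ^ t * b ^ (1 - t)) ^ v := by gcongr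
    _ = a ^ (s * u + t * v) * b ^ ((1 - s) * u + (1 - t) * v) := by
      rw [ENNReal.mul_rpow_of_nonneg _ _ hu, ENNReal.mul_rpow_of_nonneg _ _ hv, ← ENNReal.rpow_mul,
        ← ENNReal.rpow_mul, ← ENNReal.rpow_mul, ← ENNReal.rpow_mul, mul_mul_mul_comm,
        ENNReal.rpow_add_of_nonneg _ _ (by positivity) (by positivity),
        ENNReal.rpow_add_of_nonneg _ _ (mul_nonneg (sub_nonneg.2 hs₁) hu)
          (mul_nonneg (sub_nonneg.2 ht₁) hv)]

section

variable {α E : Type*} [MeasurableSpace α] [NormedAddCommGroup E] {μ : Measure α} {f : α → E}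

theorem eLpNorm_ofReal_eq_eLpNorm' {p : ℝ} (hp : 0 < p) :
    eLpNorm f (ENNReal.ofReal p) μ = eLpNorm' f p μ := by
  rw [eLpNorm_eq_eLpNorm' (by simpa using hp) ENNReal.ofReal_ne_top, ENNReal.toReal_ofReal hp.le]

theorem eLpNorm'_le_eLpNorm'_rpow_mul_eLpNorm'_rpow {p q r t : ℝ} (hp : 0 < p) (hq : 0 < q)
    (ht : t ∈ Icc (0 : ℝ) 1) (hpqr : 1 / r = t / p + (1 - t) / q)
    (hf : AEStronglyMeasurable f μ) :
    eLpNorm' f r μ ≤ eLpNorm' f p μ ^ t * eLpNorm' f q μ ^ (1 - t) := by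
  obtain ⟨ht₀, ht₁⟩ := ht
  rcases ht₀.eq_or_lt with rfl | ht₀
  · obtain rfl : r = q := by simpa using hpqr
    simp
  rcases ht₁.eq_or_lt with rfl | ht₁
  · obtain rfl : r = p := by simpa using hpqr
    simp
  have ht₁' : 0 < 1 - t := sub_pos.2 ht₁
  have hr : 0 < r := one_div_pos.mp (by rw [hpqr]; positivity)
  have hrp : r < p / t := lt_of_one_div_lt_one_div (by positivity) <| by
    rw [one_div_div, hpqr]
    exact lt_add_of_pos_right _ (by positivity)
  have hsplit (x : α) : ‖f x‖ = ‖f x‖ ^ t * ‖f x‖ ^ (1 - t) := by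
    rw [← Real.rpow_add' (norm_nonneg _) (by simp), add_sub_cancel, Real.rpow_one]
  calc eLpNorm' f r μ = eLpNorm' (fun x => ‖f x‖ ^ t * ‖f x‖ ^ (1 - t)) r μ := by
        simp_rw [← hsplit, eLpNorm'_norm]
    _ ≤ 1 * eLpNorm' (fun x => ‖f x‖ ^ t) (p / t) μ *
          eLpNorm' (fun x => ‖f x‖ ^ (1 - t)) (q / (1 - t)) μ :=
        eLpNorm'_le_eLpNorm'_mul_eLpNorm' (hf.norm.aemeasurable.pow_const _).aestronglyMeasurable
          (hf.norm.aemeasurable.pow_const _).aestronglyMeasurable (· * ·) 1 (by simp) hr hrp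
          (by rw [hpqr]; field_simp)
    _ = eLpNorm' f p μ ^ t * eLpNorm' f q μ ^ (1 - t) := by
        rw [eLpNorm'_norm_rpow _ _ _ ht₀, eLpNorm'_norm_rpow _ _ _ ht₁', one_mul,
          div_mul_cancel₀ _ ht₀.ne', div_mul_cancel₀ _ ht₁'.ne']

end

theorem interpolation_exponent_eq {θ l₁ l₂ t₁ t₂ : ℝ} (hθ : 2 < θ) (hl₁ : l₁ ≠ 0) (hl₂ : l₂ ≠ 0)
    (hconj : 1 / l₁ + 1 / l₂ = 1)
    (hrep₁ : 1 / (4 * l₁) = t₁ / θ + (1 - t₁) / (3 * θ))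
    (hrep₂ : 1 / ((θ - 2) * l₂) = t₂ / θ + (1 - t₂) / (3 * θ)) :
    t₁ * 2 + t₂ * ((θ - 2) / 2) = θ / 2 - 1 / 2 := by
  have hθ₀ : θ ≠ 0 := (by linarith : (0 : ℝ) < θ).ne'
  have hθ₂ : θ - 2 ≠ 0 := sub_ne_zero.2 hθ.ne'
  have e₁ : 4 * (1 + 2 * t₁) = 3 * θ * (1 / l₁) := by
    field_simp at hrep₁ ⊢
    linear_combination -hrep₁
  have e₂ : (θ - 2) * (1 + 2 * t₂) = 3 * θ * (1 / l₂) := by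
    field_simp at hrep₂ ⊢
    linear_combination -hrep₂
  linear_combination (e₁ + e₂ + 3 * θ * hconj) / 4

theorem interpolation_estimate_general {Ω : Type*} [MeasurableSpace Ω] (μ : Measure Ω)
    (θ l₁ l₂ : ℝ) (hθ : 3 < θ)
    (hconj : 1 / l₁ + 1 / l₂ = 1)
    (h₁ : θ ≤ 4 * l₁) (h₁' : 4 * l₁ ≤ 3 * θ)
    (h₂ : θ ≤ (θ - 2) * l₂) (h₂' : (θ - 2) * l₂ ≤ 3 * θ)
    (u : Ω → ℝ) (hu : MemLp u (ENNReal.ofReal θ) μ) :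
    eLpNorm u (ENNReal.ofReal (4 * l₁)) μ ^ (2 : ℝ) *
        eLpNorm u (ENNReal.ofReal ((θ - 2) * l₂)) μ ^ ((θ - 2) / 2) ≤
      eLpNorm u (ENNReal.ofReal θ) μ ^ (θ / 2 - 1 / 2) *
        eLpNorm u (ENNReal.ofReal (3 * θ)) μ ^ ((3 : ℝ) / 2) := by
  have hθ₀ : 0 < θ := by linarith
  obtain ⟨t₁, ht₁, hrep₁⟩ := exists_mem_Icc_one_div_eq hθ₀ h₁ h₁'
  obtain ⟨t₂, ht₂, hrep₂⟩ := exists_mem_Icc_one_div_eq hθ₀ h₂ h₂'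
  have hexp := interpolation_exponent_eq (by linarith) (by rintro rfl; linarith)
    (by rintro rfl; linarith) hconj hrep₁ hrep₂
  rw [eLpNorm_ofReal_eq_eLpNorm' (by linarith), eLpNorm_ofReal_eq_eLpNorm' (by linarith),
    eLpNorm_ofReal_eq_eLpNorm' hθ₀, eLpNorm_ofReal_eq_eLpNorm' (by linarith)]
  have hw : (0 : ℝ) ≤ (θ - 2) / 2 := by linarith
  convert ENNReal.rpow_mul_rpow_le_of_le_rpow_mul_rpow ht₁ ht₂ zero_le_two hw
    (eLpNorm'_le_eLpNorm'_rpow_mul_eLpNorm'_rpow hθ₀ (by linarith) ht₁ hrep₁ hu.1)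
    (eLpNorm'_le_eLpNorm'_rpow_mul_eLpNorm'_rpow hθ₀ (by linarith) ht₂ hrep₂ hu.1) using 3
    <;> linarith

/-- The interpolation estimate ‖u‖_{4λ₁}² ‖u‖_{(θ−2)λ₂}^{(θ−2)/2}
≤ ‖u‖_θ^{θ/2 − 1/2} ‖u‖_{3θ}^{3/2}. -/
theorem interpolation_estimate {Ω : Type*} [MeasurableSpace Ω] (μ : Measure Ω)
    (θ l₁ l₂ : ℝ) (hθ : 3 < θ) (hl₁ : 1 < l₁) (hl₂ : 1 < l₂)
    (hconj : 1 / l₁ + 1 / l₂ = 1)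
    (h₁ : θ ≤ 4 * l₁) (h₁' : 4 * l₁ ≤ 3 * θ)
    (h₂ : θ ≤ (θ - 2) * l₂) (h₂' : (θ - 2) * l₂ ≤ 3 * θ)
    (u : Ω → ℝ) (hu : MemLp u (ENNReal.ofReal θ) μ)
    (hu' : MemLp u (ENNReal.ofReal (3 * θ)) μ) :
    eLpNorm u (ENNReal.ofReal (4 * l₁)) μ ^ (2 : ℝ) *
        eLpNorm u (ENNReal.ofReal ((θ - 2) * l₂)) μ ^ ((θ - 2) / 2) ≤
      eLpNorm u (ENNReal.ofReal θ) μ ^ (θ / 2 - 1 / 2) *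
        eLpNorm u (ENNReal.ofReal (3 * θ)) μ ^ ((3 : ℝ) / 2) :=
  interpolation_estimate_general μ θ l₁ l₂ hθ hconj h₁ h₁' h₂ h₂' u hu
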